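/- Let E be a strongly connected directed graph with finitely many vertices. Then the graph inverse semigroup G(E) satisfies condition (⋆): for every infinite set A of paths in E there is an infinite subset B ⊆ A and an element μ ∈ G(E) such that for each x ∈ B the product μ·x is a path with |μ·x| > |x|. -/

import Mathlib

/-- A directed graph: vertices, edges, source and range maps. -/
structure DGraph where
  V : Type
  E : Type
  s : E → V
  r : E → V

namespace DGraph

variable {Q : DGraph}

/-- `pOk Q a l` : the list of edges `l` forms a valid path starting at vertex `a`. -/
def pOk (Q : DGraph) : Q.V → List Q.E → Prop
  | _, [] => True
  | a, e :: l => Q.s e = a ∧ pOk Q (Q.r e) l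

/-- The end vertex of an edge-list starting at `a`. -/
def pRng (Q : DGraph) (a : Q.V) (l : List Q.E) : Q.V :=
  l.foldl (fun _ e => Q.r e) a

theorem pRng_append (a : Q.V) (l₁ l₂ : List Q.E) :
    pRng Q a (l₁ ++ l₂) = pRng Q (pRng Q a l₁) l₂ :=
  by unfold pRng; exact List.foldl_append

theorem pOk_append {a : Q.V} {l₁ l₂ : List Q.E} (h₁ : pOk Q a l₁)
    (h₂ : pOk Q (pRng Q a l₁) l₂) : pOk Q a (l₁ ++ l₂) := by
  induction l₁ generalizing a with
  | nil => simpa [pRng] using h₂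
  | cons e l ih =>
      obtain ⟨he, hl⟩ := h₁
      exact ⟨he, ih hl h₂⟩

theorem pOk_drop {a : Q.V} {l₁ l₂ : List Q.E} (h : pOk Q a (l₁ ++ l₂)) :
    pOk Q (pRng Q a l₁) l₂ := by
  induction l₁ generalizing a with
  | nil => simpa [pRng] using h
  | cons e l ih => exact ih h.2

/-- A (finite, directed) path in the graph `Q`: a start vertex together with a
compatible list of edges.  Paths of length `0` are vertices. -/
structure GPath (Q : DGraph) where
  start : Q.V
  edges : List Q.E
  ok : pOk Q start edges

/-- The source `s(p)` of a path. -/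
def GPath.src (p : GPath Q) : Q.V := p.start

/-- The range `r(p)` of a path. -/
def GPath.rng (p : GPath Q) : Q.V := pRng Q p.start p.edges

/-- The length `|p|` of a path. -/
def GPath.length (p : GPath Q) : ℕ := p.edges.length

/-- The trivial (length zero) path at a vertex `a`. -/
def GPath.triv (Q : DGraph) (a : Q.V) : GPath Q := ⟨a, [], trivial⟩

/-- Concatenation of composable paths. -/
def GPath.comp (p q : GPath Q) (h : p.rng = q.start) : GPath Q :=
  ⟨p.start, p.edges ++ q.edges, pOk_append p.ok (by
    have hq := q.ok
    rw [← h] at hq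
    exact hq)⟩

theorem GPath.comp_rng (p q : GPath Q) (h : p.rng = q.start) :
    (p.comp q h).rng = q.rng := by
  show pRng Q p.start (p.edges ++ q.edges) = q.rng
  rw [pRng_append, show pRng Q p.start p.edges = q.start from h]
  rfl

theorem exists_sub {p q : GPath Q} (h1 : q.start = p.start)
    (h2 : p.edges <+: q.edges) :
    ∃ w : GPath Q, w.start = p.rng ∧ w.rng = q.rng ∧ p.edges ++ w.edges = q.edges := by
  obtain ⟨t, ht⟩ := h2
  have hok : pOk Q p.start (p.edges ++ t) := by rw [ht, ← h1]; exact q.ok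
  refine ⟨⟨p.rng, t, pOk_drop hok⟩, rfl, ?_, ht⟩
  show pRng Q (pRng Q p.start p.edges) t = pRng Q q.start q.edges
  rw [← pRng_append, ht, ← h1]

/-- If the path `q` decomposes as `p·w`, this is the path `w`. -/
noncomputable def subPath (p q : GPath Q) (h1 : q.start = p.start)
    (h2 : p.edges <+: q.edges) : GPath Q :=
  (exists_sub h1 h2).choose

theorem subPath_spec (p q : GPath Q) (h1 : q.start = p.start)
    (h2 : p.edges <+: q.edges) :
    (subPath p q h1 h2).start = p.rng ∧ (subPath p q h1 h2).rng = q.rng ∧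
      p.edges ++ (subPath p q h1 h2).edges = q.edges :=
  (exists_sub h1 h2).choose_spec

/-- The graph inverse semigroup `G(E)` over the graph `Q`: the element `0`
together with the elements `u v⁻¹` where `u, v` are paths with `r(u) = r(v)`. -/
inductive GIS (Q : DGraph) : Type
  | zero : GIS Q
  | elm (u v : GPath Q) (h : u.rng = v.rng) : GIS Q

instance : Zero (GIS Q) := ⟨GIS.zero⟩

-- Multiplication in the graph inverse semigroup:
-- `u₁v₁⁻¹ · u₂v₂⁻¹ = u₁wv₂⁻¹` if `u₂ = v₁w`, `u₁(v₂w)⁻¹` if `v₁ = u₂w`, `0` otherwise.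
open Classical in
noncomputable def GIS.mul : GIS Q → GIS Q → GIS Q
  | .zero, _ => .zero
  | _, .zero => .zero
  | .elm u₁ v₁ h₁, .elm u₂ v₂ h₂ =>
    if hA : u₂.start = v₁.start ∧ v₁.edges <+: u₂.edges then
      GIS.elm (u₁.comp (subPath v₁ u₂ hA.1 hA.2)
          (by rw [(subPath_spec v₁ u₂ hA.1 hA.2).1, h₁]))
        v₂
        (by rw [GPath.comp_rng, (subPath_spec v₁ u₂ hA.1 hA.2).2.1, h₂])
    else if hB : v₁.start = u₂.start ∧ u₂.edges <+: v₁.edges then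
      GIS.elm u₁
        (v₂.comp (subPath u₂ v₁ hB.1 hB.2)
          (by rw [(subPath_spec u₂ v₁ hB.1 hB.2).1, h₂]))
        (by rw [GPath.comp_rng, (subPath_spec u₂ v₁ hB.1 hB.2).2.1, h₁])
    else .zero

noncomputable instance : Mul (GIS Q) := ⟨GIS.mul⟩

/-- The inversion map of the graph inverse semigroup: `(uv⁻¹)⁻¹ = vu⁻¹`, `0⁻¹ = 0`. -/
def GIS.inv : GIS Q → GIS Q
  | .zero => .zero
  | .elm u v h => .elm v u h.symm

/-- The canonical identification of a path `u` with the element `u · r(u)⁻¹` of `G(E)`. -/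
def toGIS (p : GPath Q) : GIS Q := GIS.elm p (GPath.triv Q p.rng) rfl

end DGraph


namespace DGraph
/-- A directed graph is strongly connected if any vertex can be reached from any other. -/
def StrConn (Q : DGraph) : Prop :=
  ∀ a b : Q.V, ∃ p : GPath Q, p.start = a ∧ p.rng = b
end DGraph


/-!
Infinitely many paths force an edge, and by pigeonhole on the finitely many vertices infinitely
many paths of `A` start at a common vertex `a`. Strong connectivity gives a path `p` of positive
length ending at `a`; then `μ = p · r(p)⁻¹` prefixes `p` to each of them.
-/

theorem Set.Infinite.exists_infinite_inter_fiber {α β : Type*} [Finite β] {s : Set α}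
    (hs : s.Infinite) (f : α → β) : ∃ b, (s ∩ f ⁻¹' {b}).Infinite := by
  by_contra! hfin
  exact hs ((Set.finite_iUnion hfin).subset fun x hx => Set.mem_iUnion.2 ⟨f x, hx, rfl⟩)

namespace DGraph

variable {Q : DGraph}

theorem GPath.ext {p q : GPath Q} (hs : p.start = q.start) (he : p.edges = q.edges) : p = q := by
  cases p; cases q; subst hs he; rfl

theorem GPath.length_comp (p q : GPath Q) (h : p.rng = q.start) :
    (p.comp q h).length = p.length + q.length :=
  List.length_append

theorem finite_gPath_of_isEmpty [Finite Q.V] [IsEmpty Q.E] : Finite (GPath Q) :=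
  Finite.of_injective GPath.start fun _ _ hs => GPath.ext hs (Subsingleton.elim _ _)

theorem subPath_triv (a : Q.V) (x : GPath Q) (h1 : x.start = (GPath.triv Q a).start)
    (h2 : (GPath.triv Q a).edges <+: x.edges) : subPath (GPath.triv Q a) x h1 h2 = x := by
  obtain ⟨hs, -, he⟩ := subPath_spec _ x h1 h2
  exact GPath.ext (hs.trans h1.symm) he

theorem toGIS_mul_toGIS (p x : GPath Q) (h : p.rng = x.start) :
    toGIS p * toGIS x = toGIS (p.comp x h) := by
  have hA : x.start = (GPath.triv Q p.rng).start ∧ (GPath.triv Q p.rng).edges <+: x.edges :=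
    ⟨h.symm, List.nil_prefix⟩
  show GIS.mul _ _ = _
  simp only [GIS.mul, dif_pos hA, toGIS, subPath_triv]
  congr 1
  rw [GPath.comp_rng]

theorem StrConn.exists_length_pos_rng_eq (hc : StrConn Q) (e : Q.E) (a : Q.V) :
    ∃ p : GPath Q, 0 < p.length ∧ p.rng = a := by
  obtain ⟨q, hqs, hqa⟩ := hc (Q.r e) a
  let pe : GPath Q := ⟨Q.s e, [e], rfl, trivial⟩
  have hcomp : pe.rng = q.start := hqs.symm
  refine ⟨pe.comp q hcomp, ?_, by rw [GPath.comp_rng, hqa]⟩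
  rw [GPath.length_comp]
  exact Nat.add_pos_left Nat.one_pos _

end DGraph

open DGraph

theorem stmt13 (Q : DGraph) (hc : StrConn Q) (hfin : Finite Q.V) :
    ∀ A : Set (GPath Q), A.Infinite →
      ∃ B ⊆ A, B.Infinite ∧ ∃ μ : GIS Q, ∀ x ∈ B,
        ∃ y : GPath Q, μ * toGIS x = toGIS y ∧ x.length < y.length := by
  intro A hA
  obtain ⟨e⟩ : Nonempty Q.E := by
    by_contra hE
    have := not_nonempty_iff.mp hE
    have := finite_gPath_of_isEmpty (Q := Q)
    exact hA A.toFinite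
  obtain ⟨a, hB⟩ := hA.exists_infinite_inter_fiber GPath.start
  obtain ⟨p, hp, hpa⟩ := hc.exists_length_pos_rng_eq e a
  refine ⟨_, Set.inter_subset_left, hB, toGIS p, fun x hx => ?_⟩
  have hcomp : p.rng = x.start := hpa.trans hx.2.symm
  refine ⟨p.comp x hcomp, toGIS_mul_toGIS p x hcomp, ?_⟩
  rw [GPath.length_comp]
  omega
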